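/- arXiv:2305.09672 — 4 statements merged into one kernel-verified Lean document; each statement's English description precedes it below -/
import Mathlib

section
/- Let U be an ultrafilter on ℕ containing the cofinite filter, let T and Y be topological spaces, let f : T → Y be continuous, and let E ⊆ T be a set such that every point of *E is nearstandard in E (i.e., for every x ∈ *E there exists p ∈ E with x ∈ *O for every open O containing p). Then every point of *(f '' E) is nearstandard in f '' E: for every y ∈ *(f '' E) there exists q ∈ f '' E such that y ∈ *V for every open V containing q. -/
open Filter

/-- The star (nonstandard extension) of a set `A ⊆ X` inside the ultrapower
`*X = (ℕ → X)/U`: `[g] ∈ *A` iff `{i : g i ∈ A} ∈ U`. -/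
def starSet (U : Ultrafilter ℕ) {X : Type*} (A : Set X) :
    Set ((U : Filter ℕ).Germ X) :=
  {x | x.LiftPred (· ∈ A)}

lemma mem_starSet_coe (U : Ultrafilter ℕ) {X : Type*} (A : Set X) (g : ℕ → X) :
    (↑g : (U : Filter ℕ).Germ X) ∈ starSet U A ↔ ∀ᶠ i in (U : Filter ℕ), g i ∈ A :=
  Filter.Germ.liftPred_coe

/-- If `f : T → Y` is continuous and every point of `*E` is nearstandard in `E`, then
every point of `*(f '' E)` is nearstandard in `f '' E`. -/
theorem image_nearstandard (U : Ultrafilter ℕ)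
    (hU : Filter.cofinite ≤ (U : Filter ℕ)) (T Y : Type*) [TopologicalSpace T]
    [TopologicalSpace Y] (f : T → Y) (hf : Continuous f) (E : Set T)
    (hE : ∀ x ∈ starSet U E, ∃ p ∈ E, ∀ O : Set T, IsOpen O → p ∈ O → x ∈ starSet U O) :
    ∀ y ∈ starSet U (f '' E), ∃ q ∈ f '' E,
      ∀ V : Set Y, IsOpen V → q ∈ V → y ∈ starSet U V := by
  intro y hy
  induction y using Filter.Germ.inductionOn with
  | h g =>
  rw [mem_starSet_coe] at hy
  -- E is nonempty
  rcases (U : Filter ℕ).nonempty_of_mem hy with ⟨i₀, hi₀⟩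
  rcases hi₀ with ⟨t₀, ht₀, -⟩
  -- choose a lift
  have hchoice : ∀ i, ∃ t, t ∈ E ∧ (g i ∈ f '' E → f t = g i) := by
    intro i
    by_cases h : g i ∈ f '' E
    · rcases h with ⟨t, ht, hft⟩
      exact ⟨t, ht, fun _ => hft⟩
    · exact ⟨t₀, ht₀, fun h' => absurd h' h⟩
  choose h hhE hhf using hchoice
  have hx : (↑h : (U : Filter ℕ).Germ T) ∈ starSet U E := by
    rw [mem_starSet_coe]
    exact Eventually.of_forall hhE
  rcases hE _ hx with ⟨p, hpE, hp⟩
  refine ⟨f p, ⟨p, hpE, rfl⟩, fun V hV hpV => ?_⟩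
  have hO := hp (f ⁻¹' V) (hV.preimage hf) hpV
  rw [mem_starSet_coe] at hO
  rw [mem_starSet_coe]
  filter_upwards [hO, hy] with i hi hgi
  have := hhf i hgi
  rw [← this]
  exact hi
end

section
/- Let U be an ultrafilter on ℕ containing the cofinite filter, let D and E be metric spaces, and let f : D → E be a map that is S-continuous on *D, i.e., for all x, x' in the ultrapower *D with x ≈ x' (infinitesimal distance), one has *f(x) ≈ *f(x'). Then f is uniformly continuous on D. -/
open Filter

/-- Two points `x = [g]`, `x' = [h]` of the ultrapower `*D` of a metric space `D` are
infinitely close if for every real `ε > 0` the set `{i : dist (g i) (h i) < ε}` is in `U`. -/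
def InfClose (U : Ultrafilter ℕ) {D : Type*} [MetricSpace D]
    (x x' : (U : Filter ℕ).Germ D) : Prop :=
  ∀ ε : ℝ, 0 < ε → Filter.Germ.LiftRel (fun a b => dist a b < ε) x x'

/-- If the star extension of `f : D → E` sends infinitely close points of `*D` to
infinitely close points (S-continuity on `*D`), then `f` is uniformly continuous. -/
theorem sContinuous_implies_uniformContinuous (U : Ultrafilter ℕ)
    (hU : Filter.cofinite ≤ (U : Filter ℕ)) (D E : Type*) [MetricSpace D]
    [MetricSpace E] (f : D → E)
    (hf : ∀ x x' : (U : Filter ℕ).Germ D, InfClose U x x' →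
      InfClose U (x.map f) (x'.map f)) :
    UniformContinuous f := by
  rw [Metric.uniformContinuous_iff]
  by_contra hcon
  push_neg at hcon
  obtain ⟨ε, hε, hcon⟩ := hcon
  choose g h hgh hfgh using fun n : ℕ =>
    hcon (1 / (n + 1)) (by positivity)
  have hclose : InfClose U (↑g : (U : Filter ℕ).Germ D) ↑h := by
    intro ε' hε'
    show ∀ᶠ i in (U : Filter ℕ), dist (g i) (h i) < ε'
    have key : ∀ s : Set ℕ, s ∈ (cofinite : Filter ℕ) → s ∈ (U : Filter ℕ) := by
      intro s hs
      have hc : sᶜ ∉ (U : Filter ℕ) := fun hc => by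
        have h1 : sᶜ ∈ (cofinite : Filter ℕ) := hU hc
        rw [mem_cofinite, compl_compl] at h1
        rw [mem_cofinite] at hs
        exact Set.infinite_univ (by simpa using hs.union h1 : (Set.univ : Set ℕ).Finite)
      exact Ultrafilter.compl_notMem_iff.mp hc
    apply key
    show ∀ᶠ i in cofinite, dist (g i) (h i) < ε'
    rw [Nat.cofinite_eq_atTop]
    obtain ⟨N, hN⟩ := exists_nat_gt (1 / ε')
    filter_upwards [eventually_ge_atTop N] with n hn
    have h1 : 1 / ((n : ℝ) + 1) < ε' := by
      rw [div_lt_iff₀ (by positivity)]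
      rw [div_lt_iff₀ hε'] at hN
      calc (1 : ℝ) < ↑N * ε' := hN
        _ ≤ ε' * (n + 1) := by
          rw [mul_comm]
          apply mul_le_mul_of_nonneg_left _ hε'.le
          exact_mod_cast Nat.le_succ_of_le hn
      
    exact lt_trans (hgh n) h1
  have hbad := hf _ _ hclose ε hε
  have : ∀ᶠ i in (U : Filter ℕ), dist (f (g i)) (f (h i)) < ε := hbad
  have h2 : ∀ᶠ i in (U : Filter ℕ), False := by
    filter_upwards [this] with i hi
    exact absurd (hfgh i) (not_le.mpr hi)
  exact (Ultrafilter.neBot U).ne (eventually_false_iff_eq_bot.mp h2)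
end

section
/- Let U be an ultrafilter on ℕ containing the cofinite filter, let E be a compact metric space, Y a metric space, and f : E → Y continuous. Then f is S-continuous at all points of *E: for all x, x' in the ultrapower *E with x ≈ x' (infinitesimal distance), one has *f(x) ≈ *f(x'). -/
open Filter

/-- A continuous map from a compact metric space to a metric space is S-continuous at
all points of the ultrapower `*E`. -/
theorem continuous_on_compact_sContinuous (U : Ultrafilter ℕ)
    (hU : Filter.cofinite ≤ (U : Filter ℕ)) (E Y : Type*) [MetricSpace E]
    [CompactSpace E] [MetricSpace Y] (f : E → Y) (hf : Continuous f) :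
    ∀ x x' : (U : Filter ℕ).Germ E, InfClose U x x' →
      InfClose U (x.map f) (x'.map f) := by
  have huc : UniformContinuous f := CompactSpace.uniformContinuous_of_continuous hf
  intro x x' hxx' ε hε
  obtain ⟨δ, hδ, hδε⟩ := Metric.uniformContinuous_iff.mp huc ε hε
  induction x using Filter.Germ.inductionOn with
  | h g =>
    induction x' using Filter.Germ.inductionOn with
    | h h =>
      have := hxx' δ hδ
      rw [Filter.Germ.liftRel_coe] at this
      simp only [Filter.Germ.map_coe, Filter.Germ.liftRel_coe]
      exact this.mono fun i hi => hδε hi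
end

section
/- Let f : ℝ → ℝ be a function and let x, L be real numbers. Then f has derivative L at x (HasDerivAt f L x) if and only if for every infinitesimal hyperreal ε there exists an infinitesimal hyperreal λ such that *f(x + ε) − *f(x) = (L + λ)·ε, where *f is the natural extension of f to the hyperreals. -/
/-!
Write the derivative as the limit of `slope f x` along `𝓝[≠] x`. Since `𝓝[≠] x` is countably
generated, a limit along it can be tested on hyperreal points: if `g` escapes some `s ∈ G`
frequently along `F`, a sequence tending to `F` inside that escape set exists, and its class in
`ℝ*` escapes `s` too. The hyperreals tending to `𝓝[≠] x` are exactly `x + ε` with `ε`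
infinitesimal and nonzero, and for such `ε` the only possible `λ` is `*(slope f x)(x + ε) - L`.
-/

set_option linter.deprecated false

open Filter Topology

theorem Filter.tendsto_iff_forall_germ_tendsto_hyperfilter {α β : Type*} {F : Filter α}
    [F.IsCountablyGenerated] {G : Filter β} {g : α → β} :
    Tendsto g F G ↔
      ∀ y : (hyperfilter ℕ : Filter ℕ).Germ α, y.Tendsto F → (y.map g).Tendsto G := by
  refine ⟨fun h y ↦ y.inductionOn fun u hu ↦ h.comp hu, fun h ↦ ?_⟩
  by_contra hg
  obtain ⟨s, hs, hfreq⟩ := not_tendsto_iff_exists_frequently_notMem.1 hg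
  have := frequently_iff_neBot.1 hfreq
  obtain ⟨u, hu⟩ := exists_seq_tendsto (F ⊓ 𝓟 {a | g a ∉ s})
  obtain ⟨huF, hus⟩ := tendsto_inf.1 (hu.mono_left Nat.hyperfilter_le_atTop)
  obtain ⟨n, hn, hn'⟩ := ((h u huF).eventually hs |>.and (tendsto_principal.1 hus)).exists
  exact hn' hn

namespace Hyperreal

theorem infinitesimal_sub_iff_germ_tendsto {y : ℝ*} {r : ℝ} :
    Infinitesimal (y - r) ↔ y.Tendsto (𝓝 r) := by
  obtain ⟨u, rfl⟩ := ofSeq_surjective y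
  exact isSt_ofSeq_iff_tendsto.trans tendsto_sub_nhds_zero_iff

theorem germ_tendsto_nhdsNE_iff {y : ℝ*} {x : ℝ} :
    y.Tendsto (𝓝[≠] x) ↔ Infinitesimal (y - x) ∧ y ≠ x := by
  obtain ⟨u, rfl⟩ := ofSeq_surjective y
  rw [infinitesimal_sub_iff_germ_tendsto]
  exact tendsto_nhdsWithin_iff.trans <| and_congr_right' <|
    Ultrafilter.eventually_not.trans (not_congr Germ.coe_eq.symm)

theorem exists_infinitesimal_slope_iff (f : ℝ → ℝ) (x L : ℝ) {δ : ℝ*} (hδ : δ ≠ 0) :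
    (∃ lam : ℝ*, Infinitesimal lam ∧
      Germ.map f ((x : ℝ*) + δ) - Germ.map f (x : ℝ*) = ((L : ℝ*) + lam) * δ) ↔
      (Germ.map (slope f x) ((x : ℝ*) + δ)).Tendsto (𝓝 L) := by
  obtain ⟨e, rfl⟩ := ofSeq_surjective δ
  have he : ∀ᶠ n in hyperfilter ℕ, e n ≠ 0 :=
    Ultrafilter.eventually_not.2 (mt Germ.coe_eq.2 hδ)
  constructor
  · rintro ⟨lam, hlam, hΔ⟩
    obtain ⟨l, rfl⟩ := ofSeq_surjective lam
    have hl : Tendsto (fun n ↦ L + l n) (hyperfilter ℕ) (𝓝 L) := by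
      simpa using (isSt_ofSeq_iff_tendsto.1 hlam).const_add L
    refine hl.congr' ?_
    filter_upwards [Germ.coe_eq.1 hΔ, he] with n hn hen
    rw [Function.comp_apply, slope_def_field, add_sub_cancel_left, eq_div_iff hen]
    exact hn.symm
  · intro h
    refine ⟨ofSeq fun n ↦ slope f x (x + e n) - L, infinitesimal_sub_iff_germ_tendsto.2 h,
      Germ.coe_eq.2 (.of_forall fun n ↦ ?_)⟩
    simp only [Function.comp_apply, slope_def_field, add_sub_cancel_left, add_sub_cancel]
    exact (div_mul_cancel_of_imp fun h ↦ by simp [h]).symm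

end Hyperreal

/-- `f` has derivative `L` at `x` iff for every infinitesimal hyperreal `ε` there is an
infinitesimal hyperreal `λ` with `*f(x + ε) - *f(x) = (L + λ) * ε`, where `*f` is the
natural extension of `f` to the hyperreals. -/
theorem hasDerivAt_iff_infinitesimal_slope (f : ℝ → ℝ) (x L : ℝ) :
    HasDerivAt f L x ↔
      ∀ ε : ℝ*, Hyperreal.Infinitesimal ε →
        ∃ lam : ℝ*, Hyperreal.Infinitesimal lam ∧
          Filter.Germ.map f ((x : ℝ*) + ε) - Filter.Germ.map f (x : ℝ*) =
            ((L : ℝ*) + lam) * ε := by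
  rw [hasDerivAt_iff_tendsto_slope, tendsto_iff_forall_germ_tendsto_hyperfilter]
  refine (Equiv.addLeft (x : ℝ*)).forall_congr_right.symm.trans (forall_congr' fun ε ↦ ?_)
  simp only [Equiv.coe_addLeft, Hyperreal.germ_tendsto_nhdsNE_iff, add_sub_cancel_left, ne_eq,
    add_eq_left, and_imp]
  refine forall_congr' fun hε ↦ ?_
  rcases eq_or_ne ε 0 with rfl | hε0
  -- `simp` leaves `0 = 0` between the zero of `Germ` and that of `ℝ*`
  · exact iff_of_true (absurd rfl) ⟨0, Hyperreal.infinitesimal_zero, by simp; rfl⟩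
  · simp [hε0, Hyperreal.exists_infinitesimal_slope_iff f x L hε0]
end
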